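/- arXiv:2304.12273 — 3 statements merged into one kernel-verified Lean document; each statement's English description precedes it below -/
import Mathlib

section
/- The control α* ≡ 0 is an equilibrium for the cost J(t,α) = ∫_t^1 c(s)·α(s)·(∫_s^1 α(r) dr) ds: for every t ∈ [0,1) and every admissible α, liminf_{δ↓0} (1/δ)·[J(t, α⊕_{t+δ}α*) − J(t, α*)] ≥ 0. -/
open MeasureTheory Set Filter
noncomputable def tn (n : ℕ) : ℝ := 1 - 1 / 2 ^ n
noncomputable def sn (n : ℕ) : ℝ := (tn n + 3 * tn (n + 1)) / 4
noncomputable def c (x : ℝ) : ℝ :=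
  ∑' n : ℕ, ((Ico (tn n) (sn n)).indicator (fun _ => (1 : ℝ)) x
    + 6 * (Ico (sn n) (tn (n + 1))).indicator (fun _ => (1 : ℝ)) x)
noncomputable def J (t : ℝ) (α : ℝ → ℝ) : ℝ :=
  ∫ s in t..1, c s * α s * ∫ r in s..1, α r

lemma tn_lt (n : ℕ) : tn n < tn (n + 1) := by
  have h : (2:ℝ) ^ n < 2 ^ (n+1) := pow_lt_pow_right₀ one_lt_two n.lt_succ_self
  have h1 : (0:ℝ) < 2 ^ n := by positivity
  have := one_div_lt_one_div_of_lt h1 h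
  simp only [tn]; linarith

lemma tn_mono : StrictMono tn := strictMono_nat_of_lt_succ tn_lt
lemma tn_le_sn (n : ℕ) : tn n ≤ sn n := by have := tn_lt n; simp only [sn]; linarith
lemma sn_le_tn (n : ℕ) : sn n ≤ tn (n + 1) := by have := tn_lt n; simp only [sn]; linarith

lemma disj {x : ℝ} {m n : ℕ} (h : m ≠ n) (hx : x ∈ Ico (tn m) (tn (m+1))) :
    x ∉ Ico (tn n) (tn (n+1)) := by
  rcases lt_or_gt_of_ne h with hmn | hmn
  · intro hx'
    have : tn (m+1) ≤ tn n := tn_mono.monotone hmn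
    exact absurd hx'.1 (by linarith [hx.2])
  · intro hx'
    have : tn (n+1) ≤ tn m := tn_mono.monotone hmn
    exact absurd hx.1 (by linarith [hx'.2])

lemma sub1 (n : ℕ) : Ico (tn n) (sn n) ⊆ Ico (tn n) (tn (n+1)) :=
  Ico_subset_Ico le_rfl (sn_le_tn n)
lemma sub2 (n : ℕ) : Ico (sn n) (tn (n+1)) ⊆ Ico (tn n) (tn (n+1)) :=
  Ico_subset_Ico (tn_le_sn n) le_rfl

noncomputable def D (x : ℝ) : ℝ :=
  (⋃ n, Ico (tn n) (sn n)).indicator (fun _ => (1:ℝ)) x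
    + 6 * (⋃ n, Ico (sn n) (tn (n+1))).indicator (fun _ => (1:ℝ)) x

lemma c_eq_D (x : ℝ) : c x = D x ∧ (c x = 0 ∨ c x = 1 ∨ c x = 6) := by
  by_cases h : ∃ n, x ∈ Ico (tn n) (tn (n+1))
  · obtain ⟨n, hn⟩ := h
    have hc : c x = (Ico (tn n) (sn n)).indicator (fun _ => (1 : ℝ)) x
        + 6 * (Ico (sn n) (tn (n + 1))).indicator (fun _ => (1 : ℝ)) x := by
      refine tsum_eq_single n fun m hm => ?_
      have h1 : x ∉ Ico (tn m) (sn m) := fun hx => disj hm (sub1 m hx) hn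
      have h2 : x ∉ Ico (sn m) (tn (m+1)) := fun hx => disj hm (sub2 m hx) hn
      simp [indicator_of_notMem h1, indicator_of_notMem h2]
    by_cases hs : x < sn n
    · have hx1 : x ∈ Ico (tn n) (sn n) := ⟨hn.1, hs⟩
      have hx2 : x ∉ ⋃ m, Ico (sn m) (tn (m+1)) := by
        rintro hx
        obtain ⟨m, hm⟩ := mem_iUnion.mp hx
        rcases eq_or_ne m n with rfl | hmn
        · exact absurd hm.1 (not_le.mpr hs)
        · exact disj hmn (sub2 m hm) hn
      have hx2' : x ∉ Ico (sn n) (tn (n+1)) := fun hx => hx2 (mem_iUnion.mpr ⟨n, hx⟩)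
      have hx1' : x ∈ ⋃ m, Ico (tn m) (sn m) := mem_iUnion.mpr ⟨n, hx1⟩
      rw [hc]
      simp [D, indicator_of_mem hx1, indicator_of_notMem hx2, indicator_of_notMem hx2',
        indicator_of_mem hx1']
    · have hx2 : x ∈ Ico (sn n) (tn (n+1)) := ⟨not_lt.mp hs, hn.2⟩
      have hx1 : x ∉ ⋃ m, Ico (tn m) (sn m) := by
        rintro hx
        obtain ⟨m, hm⟩ := mem_iUnion.mp hx
        rcases eq_or_ne m n with rfl | hmn
        · exact absurd hm.2 hs
        · exact disj hmn (sub1 m hm) hn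
      have hx1' : x ∉ Ico (tn n) (sn n) := fun hx => hx1 (mem_iUnion.mpr ⟨n, hx⟩)
      have hx2' : x ∈ ⋃ m, Ico (sn m) (tn (m+1)) := mem_iUnion.mpr ⟨n, hx2⟩
      rw [hc]
      simp [D, indicator_of_mem hx2, indicator_of_notMem hx1, indicator_of_notMem hx1',
        indicator_of_mem hx2']
  · push_neg at h
    have hc : c x = 0 := by
      have : ∀ m : ℕ, ((Ico (tn m) (sn m)).indicator (fun _ => (1 : ℝ)) x
          + 6 * (Ico (sn m) (tn (m + 1))).indicator (fun _ => (1 : ℝ)) x) = 0 := by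
        intro m
        have h1 : x ∉ Ico (tn m) (sn m) := fun hx => h m (sub1 m hx)
        have h2 : x ∉ Ico (sn m) (tn (m+1)) := fun hx => h m (sub2 m hx)
        simp [indicator_of_notMem h1, indicator_of_notMem h2]
      simp only [c]
      rw [tsum_congr this, tsum_zero]
    have hd : D x = 0 := by
      have h1 : x ∉ ⋃ m, Ico (tn m) (sn m) := by
        rintro hx; obtain ⟨m, hm⟩ := mem_iUnion.mp hx; exact h m (sub1 m hm)
      have h2 : x ∉ ⋃ m, Ico (sn m) (tn (m+1)) := by
        rintro hx; obtain ⟨m, hm⟩ := mem_iUnion.mp hx; exact h m (sub2 m hm)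
      simp [D, indicator_of_notMem h1, indicator_of_notMem h2]
    exact ⟨hc.trans hd.symm, Or.inl hc⟩

lemma c_meas : Measurable c := by
  have : c = D := funext fun x => (c_eq_D x).1
  rw [this]
  apply Measurable.add
  · exact measurable_const.indicator (MeasurableSet.iUnion fun n => measurableSet_Ico)
  · exact (measurable_const.indicator (MeasurableSet.iUnion fun n => measurableSet_Ico)).const_mul 6

lemma c_bound (x : ℝ) : |c x| ≤ 6 := by
  rcases (c_eq_D x).2 with h | h | h <;> rw [h] <;> norm_num

theorem stmt3 :
    ∀ t ∈ Ico (0 : ℝ) 1, ∀ α : ℝ → ℝ, Measurable α → (∀ x, α x ∈ Icc (-1 : ℝ) 1) →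
      0 ≤ liminf
        (fun δ : ℝ =>
          (J t (fun x => if x < t + δ then α x else 0) - J t (fun _ => 0)) / δ)
        (nhdsWithin 0 (Ioi 0)) := by
  rintro t ⟨ht0, ht1⟩ α hα hbd
  have hJ0 : J t (fun _ => 0) = 0 := by simp [J]
  have key : ∀ δ ∈ Ioc (0:ℝ) (1 - t),
      |(J t (fun x => if x < t + δ then α x else 0) - J t (fun _ => 0)) / δ| ≤ 6 * δ := by
    intro δ hδ
    obtain ⟨hδ0, hδ1⟩ := hδ
    rw [hJ0, sub_zero]
    set β : ℝ → ℝ := fun x => if x < t + δ then α x else 0 with hβ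
    have hβm : Measurable β :=
      Measurable.ite (measurableSet_lt measurable_id measurable_const) hα measurable_const
    have hβbd : ∀ x, ‖β x‖ ≤ 1 := by
      intro x; simp only [hβ, Real.norm_eq_abs]
      split
      · exact abs_le.mpr ⟨(hbd x).1, (hbd x).2⟩
      · norm_num
    have hβint : ∀ a b : ℝ, IntervalIntegrable β volume a b := by
      intro a b
      rw [intervalIntegrable_iff]
      exact Measure.integrableOn_of_bounded (M := 1) measure_Ioc_lt_top.ne
        hβm.aestronglyMeasurable (ae_of_all _ hβbd)
    set g : ℝ → ℝ := fun s => ∫ r in s..1, β r with hg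
    have hgc : Continuous g := by
      have h1 : Continuous fun s => ∫ r in (1:ℝ)..s, β r :=
        intervalIntegral.continuous_primitive (fun a b => hβint a b) 1
      have h2 : g = fun s => -∫ r in (1:ℝ)..s, β r := by
        funext s; exact intervalIntegral.integral_symm 1 s
      rw [h2]; exact h1.neg
    have hβ0 : ∀ x, t + δ ≤ x → β x = 0 := fun x hx => if_neg (not_lt.mpr hx)
    have htδ1 : t + δ ≤ 1 := by linarith
    have hgbd : ∀ s ∈ Icc t (t + δ), |g s| ≤ δ := by
      intro s hs
      have h2 : (∫ r in (t+δ)..1, β r) = 0 := by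
        rw [intervalIntegral.integral_congr (g := fun _ => (0:ℝ)) ?_,
          intervalIntegral.integral_zero]
        intro x hx
        rw [uIcc_of_le htδ1] at hx
        exact hβ0 x hx.1
      have hsplit : g s = (∫ r in s..(t+δ), β r) + ∫ r in (t+δ)..1, β r :=
        (intervalIntegral.integral_add_adjacent_intervals (hβint _ _) (hβint _ _)).symm
      rw [hsplit, h2, add_zero]
      have hb := intervalIntegral.norm_integral_le_of_norm_le_const
        (C := 1) (f := β) (a := s) (b := t+δ) (fun x _ => hβbd x)
      rw [Real.norm_eq_abs] at hb
      have habs : |t + δ - s| ≤ δ := by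
        rw [abs_of_nonneg (by linarith [hs.2])]; linarith [hs.1]
      calc |∫ r in s..(t+δ), β r| ≤ 1 * |t + δ - s| := hb
        _ ≤ δ := by rw [one_mul]; exact habs
    set f : ℝ → ℝ := fun s => c s * β s * g s with hf
    have hfm : Measurable f := (c_meas.mul hβm).mul hgc.measurable
    have hf0 : ∀ x, t + δ ≤ x → f x = 0 := by
      intro x hx; rw [hf]; simp [hβ0 x hx]
    have hfbd : ∀ s ∈ Icc t (t + δ), |f s| ≤ 6 * δ := by
      intro s hs
      have h2 : |β s| ≤ 1 := by rw [← Real.norm_eq_abs]; exact hβbd s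
      have h3 : |g s| ≤ δ := hgbd s hs
      calc |f s| = |c s| * |β s| * |g s| := by rw [hf, abs_mul, abs_mul]
        _ ≤ 6 * 1 * δ :=
            mul_le_mul (mul_le_mul (c_bound s) h2 (abs_nonneg _) (by norm_num)) h3
              (abs_nonneg _) (by positivity)
        _ = 6 * δ := by ring
    have hfint1 : IntervalIntegrable f volume t (t + δ) := by
      rw [intervalIntegrable_iff]
      refine Measure.integrableOn_of_bounded (M := 6 * δ) measure_Ioc_lt_top.ne
        hfm.aestronglyMeasurable ?_
      rw [uIoc_of_le (by linarith : t ≤ t + δ)]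
      refine (ae_restrict_iff' measurableSet_Ioc).mpr (ae_of_all _ fun x hx => ?_)
      rw [Real.norm_eq_abs]
      exact hfbd x ⟨le_of_lt hx.1, hx.2⟩
    have hint2 : IntervalIntegrable f volume (t+δ) 1 := by
      rw [intervalIntegrable_iff]
      refine (integrable_zero _ _ _).congr ?_
      rw [uIoc_of_le htδ1]
      refine (ae_restrict_iff' measurableSet_Ioc).mpr (ae_of_all _ fun x hx => ?_)
      exact (hf0 x (le_of_lt hx.1)).symm
    have hint2z : (∫ s in (t+δ)..1, f s) = 0 := by
      rw [intervalIntegral.integral_congr (g := fun _ => (0:ℝ)) ?_,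
        intervalIntegral.integral_zero]
      intro x hx; rw [uIcc_of_le htδ1] at hx; exact hf0 x hx.1
    have hJ : J t β = ∫ s in t..(t+δ), f s := by
      have : J t β = ∫ s in t..1, f s := by
        simp only [J, hf, hg]
      rw [this, ← intervalIntegral.integral_add_adjacent_intervals hfint1 hint2, hint2z,
        add_zero]
    have hJbd : |J t β| ≤ 6 * δ * δ := by
      rw [hJ]
      have hb := intervalIntegral.norm_integral_le_of_norm_le_const
        (C := 6 * δ) (f := f) (a := t) (b := t + δ) ?_
      · rw [Real.norm_eq_abs] at hb
        have : |t + δ - t| = δ := by rw [abs_of_nonneg (by linarith)]; ring_nf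
        rw [this] at hb
        exact hb
      · intro x hx
        rw [uIoc_of_le (by linarith : t ≤ t + δ)] at hx
        rw [Real.norm_eq_abs]
        exact hfbd x ⟨le_of_lt hx.1, hx.2⟩
    rw [abs_div, abs_of_pos hδ0, div_le_iff₀ hδ0]
    calc |J t β| ≤ 6 * δ * δ := hJbd
      _ = 6 * δ * δ := rfl
  have hT : Tendsto
      (fun δ : ℝ =>
        (J t (fun x => if x < t + δ then α x else 0) - J t (fun _ => 0)) / δ)
      (nhdsWithin 0 (Ioi 0)) (nhds 0) := by
    apply squeeze_zero_norm' (a := fun δ : ℝ => 6 * δ)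
    · filter_upwards [Ioc_mem_nhdsGT_of_mem
        (show (0:ℝ) ∈ Ico (0:ℝ) (1 - t) from ⟨le_refl 0, by linarith⟩)] with δ hδ
      rw [Real.norm_eq_abs]
      exact key δ hδ
    · have h6 : Tendsto (fun δ : ℝ => 6 * δ) (nhds 0) (nhds (6 * 0)) :=
        (tendsto_id.const_mul 6)
      rw [mul_zero] at h6
      exact h6.mono_left nhdsWithin_le_nhds
  rw [hT.liminf_eq]
end

section
/- If α* : [0,1] → [-1,1] is measurable and satisfies: α*(t) = -1 for a.e. t with Y(t) > 0 and α*(t) = 1 for a.e. t with Y(t) < 0, where Y(t) = ∫_t^1 α*(r) dr, then Y ≡ 0 on [0,1] and α* = 0 a.e. -/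
open MeasureTheory Set

lemma aux_int (α : ℝ → ℝ) (hα : Measurable α) (hb : ∀ x, α x ∈ Icc (-1 : ℝ) 1) :
    ∀ a b : ℝ, IntervalIntegrable α volume a b := by
  have h : ∀ a b : ℝ, IntegrableOn α (Ioc a b) volume := by
    intro a b
    refine Measure.integrableOn_of_bounded (M := 1) measure_Ioc_lt_top.ne
      hα.aestronglyMeasurable (ae_of_all _ fun x => ?_)
    rw [Real.norm_eq_abs, abs_le]
    exact ⟨(hb x).1, (hb x).2⟩
  exact fun a b => ⟨h a b, h b a⟩

lemma aux_nonpos (α : ℝ → ℝ) (hα : Measurable α) (hb : ∀ x, α x ∈ Icc (-1 : ℝ) 1)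
    (Y : ℝ → ℝ) (hY : ∀ t, Y t = ∫ r in t..1, α r)
    (h1 : ∀ᵐ t ∂(volume.restrict (Icc (0 : ℝ) 1)), 0 < Y t → α t = -1)
    {t₀ : ℝ} (ht₀ : t₀ ∈ Icc (0 : ℝ) 1) : Y t₀ ≤ 0 := by
  have hInt := aux_int α hα hb
  have Ycont : Continuous Y := by
    have : Continuous fun t => -(∫ r in (1:ℝ)..t, α r) :=
      (intervalIntegral.continuous_primitive hInt 1).neg
    convert this using 1
    funext t
    rw [hY t, intervalIntegral.integral_symm]
  have Yadd : ∀ a b : ℝ, Y a = (∫ r in a..b, α r) + Y b := by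
    intro a b
    rw [hY a, hY b, intervalIntegral.integral_add_adjacent_intervals (hInt a b) (hInt b 1)]
  have Y1 : Y 1 = 0 := by rw [hY]; simp
  by_contra hc
  push_neg at hc
  set S : Set ℝ := Icc t₀ 1 ∩ Y ⁻¹' {0} with hSdef
  have hS1 : (1:ℝ) ∈ S := ⟨⟨ht₀.2, le_refl 1⟩, by simpa using Y1⟩
  have hSne : S.Nonempty := ⟨1, hS1⟩
  have hSbdd : BddBelow S := ⟨t₀, fun x hx => hx.1.1⟩
  have hSclosed : IsClosed S :=
    isClosed_Icc.inter (isClosed_singleton.preimage Ycont)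
  set t₁ := sInf S with ht₁def
  have ht₁S : t₁ ∈ S := hSclosed.csInf_mem hSne hSbdd
  have ht₀t₁ : t₀ ≤ t₁ := le_csInf hSne fun x hx => hx.1.1
  have ht₁le : t₁ ≤ 1 := ht₁S.1.2
  have hpos : ∀ t ∈ Ico t₀ t₁, 0 < Y t := by
    intro t ht
    rcases lt_trichotomy (Y t) 0 with h | h | h
    · exfalso
      have hsub : (0:ℝ) ∈ Icc (Y t) (Y t₀) := ⟨h.le, hc.le⟩
      obtain ⟨c, hc1, hc2⟩ := intermediate_value_Icc' ht.1 Ycont.continuousOn hsub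
      have hcS : c ∈ S := ⟨⟨hc1.1, hc1.2.trans (ht.2.le.trans ht₁le)⟩, by simpa using hc2⟩
      have : t₁ ≤ c := csInf_le hSbdd hcS
      linarith [hc1.2, ht.2]
    · exfalso
      have hcS : t ∈ S := ⟨⟨ht.1, ht.2.le.trans ht₁le⟩, by simpa using h⟩
      exact absurd (csInf_le hSbdd hcS) (not_le.mpr ht.2)
    · exact h
  have hY0 : Y t₁ = 0 := ht₁S.2
  have hne : ∀ᵐ x : ℝ ∂volume, x ≠ t₁ := by
    rw [ae_iff]
    have hset : {x : ℝ | ¬x ≠ t₁} = {t₁} := by ext x; simp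
    rw [hset]
    exact measure_singleton t₁
  have h1' : ∀ᵐ x : ℝ ∂volume, x ∈ Icc (0:ℝ) 1 → (0 < Y x → α x = -1) :=
    (ae_restrict_iff' measurableSet_Icc).mp h1
  have hint_eq : (∫ r in t₀..t₁, α r) = ∫ r in t₀..t₁, (-1 : ℝ) := by
    apply intervalIntegral.integral_congr_ae
    filter_upwards [h1', hne] with x hx hxne hxI
    rw [uIoc_of_le ht₀t₁] at hxI
    have hxlt : x < t₁ := lt_of_le_of_ne hxI.2 hxne
    have hx01 : x ∈ Icc (0:ℝ) 1 := ⟨ht₀.1.trans hxI.1.le, hxI.2.trans ht₁le⟩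
    exact hx hx01 (hpos x ⟨hxI.1.le, hxlt⟩)
  have : Y t₀ = -(t₁ - t₀) + Y t₁ := by
    rw [Yadd t₀ t₁, hint_eq, intervalIntegral.integral_const, smul_eq_mul]
    ring
  rw [hY0] at this
  linarith

theorem stmt4 (α : ℝ → ℝ) (hα : Measurable α) (hb : ∀ x, α x ∈ Icc (-1 : ℝ) 1)
    (Y : ℝ → ℝ) (hY : ∀ t, Y t = ∫ r in t..1, α r)
    (h1 : ∀ᵐ t ∂(volume.restrict (Icc (0 : ℝ) 1)), 0 < Y t → α t = -1)
    (h2 : ∀ᵐ t ∂(volume.restrict (Icc (0 : ℝ) 1)), Y t < 0 → α t = 1) :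
    (∀ t ∈ Icc (0 : ℝ) 1, Y t = 0) ∧
      ∀ᵐ t ∂(volume.restrict (Icc (0 : ℝ) 1)), α t = 0 := by
  have hInt := aux_int α hα hb
  have Yadd : ∀ a b : ℝ, Y a = (∫ r in a..b, α r) + Y b := by
    intro a b
    rw [hY a, hY b, intervalIntegral.integral_add_adjacent_intervals (hInt a b) (hInt b 1)]
  have part1 : ∀ t ∈ Icc (0 : ℝ) 1, Y t = 0 := by
    intro t ht
    refine le_antisymm (aux_nonpos α hα hb Y hY h1 ht) ?_
    have hb' : ∀ x, -α x ∈ Icc (-1 : ℝ) 1 := fun x => ⟨by linarith [(hb x).2], by linarith [(hb x).1]⟩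
    have hY' : ∀ t, -Y t = ∫ r in t..1, -α r := by
      intro t
      rw [hY t, intervalIntegral.integral_neg]
    have h1' : ∀ᵐ t ∂(volume.restrict (Icc (0 : ℝ) 1)), 0 < -Y t → -α t = -1 := by
      filter_upwards [h2] with t ht h
      rw [ht (by linarith)]
    have := aux_nonpos (fun x => -α x) hα.neg hb' (fun t => -Y t) hY' h1' ht
    simpa using this
  refine ⟨part1, ?_⟩
  -- Lebesgue differentiation
  have hloc : LocallyIntegrable α volume := by
    intro x
    refine ⟨Icc (x - 1) (x + 1), Icc_mem_nhds (by linarith) (by linarith), ?_⟩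
    refine Measure.integrableOn_of_bounded (M := 1) measure_Icc_lt_top.ne
      hα.aestronglyMeasurable (ae_of_all _ fun y => ?_)
    rw [Real.norm_eq_abs, abs_le]
    exact ⟨(hb y).1, (hb y).2⟩
  have hLeb := ae_restrict_of_ae
    (μ := volume) (s := Icc (0:ℝ) 1)
    (IsUnifLocDoublingMeasure.ae_tendsto_average (μ := (volume : Measure ℝ)) hloc 1)
  have hmem : ∀ᵐ x ∂(volume.restrict (Icc (0:ℝ) 1)), x ∈ Icc (0:ℝ) 1 :=
    ae_restrict_mem measurableSet_Icc
  have hne : ∀ᵐ x ∂(volume.restrict (Icc (0:ℝ) 1)), x ≠ 0 ∧ x ≠ 1 := by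
    apply ae_restrict_of_ae
    rw [ae_iff]
    have hset : {x : ℝ | ¬(x ≠ 0 ∧ x ≠ 1)} = {0, 1} := by
      ext x
      simp only [mem_setOf_eq, not_and_or, not_ne_iff, mem_insert_iff, mem_singleton_iff]
    rw [hset]
    exact (Set.Finite.insert 0 (Set.finite_singleton 1)).countable.measure_zero _
  filter_upwards [hLeb, hmem, hne] with x hx hx01 hxne
  have hx0 : 0 < x := lt_of_le_of_ne hx01.1 (Ne.symm hxne.1)
  have hx1 : x < 1 := lt_of_le_of_ne hx01.2 hxne.2
  have htend : Filter.Tendsto (fun j => ⨍ y in Metric.closedBall x j, α y) (nhdsWithin 0 (Ioi 0)) (nhds (α x)) := by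
    refine hx (fun _ => x) id Filter.tendsto_id ?_
    filter_upwards [self_mem_nhdsWithin] with j hj
    have hj' : (0:ℝ) < j := hj
    exact Metric.mem_closedBall_self (by simp only [id_eq]; linarith)
  have hev : ∀ᶠ j in nhdsWithin 0 (Ioi 0), (⨍ y in Metric.closedBall x j, α y) = 0 := by
    have hmemIoo : Ioo (0:ℝ) (min x (1 - x)) ∈ nhdsWithin 0 (Ioi 0) :=
      Ioo_mem_nhdsGT_of_mem ⟨le_refl 0, lt_min hx0 (by linarith)⟩
    filter_upwards [hmemIoo] with j hj
    have hj0 : 0 < j := hj.1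
    have hxj0 : (0:ℝ) ≤ x - j := by
      have := lt_of_lt_of_le hj.2 (min_le_left _ _); linarith
    have hxj1 : x + j ≤ 1 := by
      have := lt_of_lt_of_le hj.2 (min_le_right _ _); linarith
    have hintzero : (∫ y in Metric.closedBall x j, α y) = 0 := by
      rw [Real.closedBall_eq_Icc, MeasureTheory.integral_Icc_eq_integral_Ioc,
        ← intervalIntegral.integral_of_le (by linarith : x - j ≤ x + j)]
      have h := Yadd (x - j) (x + j)
      rw [part1 _ ⟨hxj0, by linarith⟩, part1 _ ⟨by linarith, hxj1⟩] at h
      linarith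
    rw [setAverage_eq, hintzero, smul_zero]
  have htend0 : Filter.Tendsto (fun j => ⨍ y in Metric.closedBall x j, α y) (nhdsWithin 0 (Ioi 0)) (nhds 0) :=
    Filter.Tendsto.congr' (Filter.EventuallyEq.symm hev) tendsto_const_nhds
  exact tendsto_nhds_unique htend htend0
end

section
/- Let α, α* : [0,1] → [-1,1] be measurable, t ∈ [0,1), and suppose c is constant equal to c(t) > 0 on [t, t+δ₀]. Writing α^δ := α·1_{[0,t+δ)} + α*·1_{[t+δ,1]}, for 0 < δ ≤ δ₀ one has J(t, α^δ) − J(t, α*) = c(t)·Y*(t)·∫_t^{t+δ}(α(s) − α*(s)) ds + O(δ²), where Y*(t) := ∫_t^1 α*(r) dr, and the O(δ²) term is bounded in absolute value by C·δ² for a constant C independent of δ. -/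
open MeasureTheory Set

noncomputable def Jc (c : ℝ → ℝ) (t : ℝ) (α : ℝ → ℝ) : ℝ :=
  ∫ s in t..1, c s * α s * ∫ r in s..1, α r

/-!
The spliced control agrees with `αs` from `t + δ` on, so the two payoffs differ only by an
integral over `[t, t + δ]`, where `c ≡ c t` and the spliced control is `α`. On that interval the
tails `∫_s^1` of both controls are within `O(δ)` of `Y*(t)`, so the integrand deviates from
`c t * Y*(t) * (α - αs)` by `O(δ)` on an interval of length `δ`.
-/

open intervalIntegral

lemma abs_mul_sub_mul_sub_mul_sub_le {a b y z w : ℝ} (ha : |a| ≤ 1) (hb : |b| ≤ 1) :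
    |a * y - b * z - w * (a - b)| ≤ |y - w| + |z - w| :=
  calc |a * y - b * z - w * (a - b)| = |a * (y - w) - b * (z - w)| := by ring_nf
    _ ≤ |a * (y - w)| + |b * (z - w)| := abs_sub _ _
    _ ≤ |y - w| + |z - w| := by
      rw [abs_mul, abs_mul]
      exact add_le_add (mul_le_of_le_one_left (abs_nonneg _) ha)
        (mul_le_of_le_one_left (abs_nonneg _) hb)

section Controls

variable {c f g : ℝ → ℝ}

lemma intervalIntegrable_of_abs_le {M : ℝ} (hf : Measurable f) (hM : ∀ x, |f x| ≤ M)
    (a b : ℝ) : IntervalIntegrable f volume a b :=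
  intervalIntegrable_const.mono_fun' hf.aestronglyMeasurable (ae_of_all _ hM)

lemma abs_integral_le_of_abs_le_one (hf : ∀ x, |f x| ≤ 1) (a b : ℝ) :
    |∫ r in a..b, f r| ≤ |b - a| := by
  simpa using norm_integral_le_of_norm_le_const (a := a) (b := b) (f := f) fun x _ => hf x

lemma continuous_integral_to_one (hf : ∀ a b, IntervalIntegrable f volume a b) :
    Continuous fun s => ∫ r in s..1, f r :=
  (continuous_primitive hf 1).neg.congr fun s => (integral_symm 1 s).symm

lemma abs_integral_to_one_sub_le (hg : Measurable g) (hg1 : ∀ x, |g x| ≤ 1) (s t : ℝ) :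
    |(∫ r in s..1, g r) - ∫ r in t..1, g r| ≤ |s - t| := by
  have hgi := intervalIntegrable_of_abs_le hg hg1
  rw [integral_interval_sub_interval_comm' (hgi s 1) (hgi t 1) (hgi s t), integral_same,
    zero_sub, abs_neg]
  exact abs_integral_le_of_abs_le_one hg1 t s

lemma abs_integral_to_one_sub_of_eqOn (hf : Measurable f) (hf1 : ∀ x, |f x| ≤ 1)
    (hg : Measurable g) (hg1 : ∀ x, |g x| ≤ 1) {u : ℝ} (hfg : EqOn f g (uIcc u 1)) (s : ℝ) :
    |(∫ r in s..1, f r) - ∫ r in s..1, g r| ≤ 2 * |u - s| := by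
  have hfi := intervalIntegrable_of_abs_le hf hf1
  have hgi := intervalIntegrable_of_abs_le hg hg1
  rw [← integral_add_adjacent_intervals (hfi s u) (hfi u 1),
    ← integral_add_adjacent_intervals (hgi s u) (hgi u 1), integral_congr hfg,
    add_sub_add_right_eq_sub]
  calc |(∫ r in s..u, f r) - ∫ r in s..u, g r|
      ≤ |∫ r in s..u, f r| + |∫ r in s..u, g r| := abs_sub _ _
    _ ≤ |u - s| + |u - s| :=
      add_le_add (abs_integral_le_of_abs_le_one hf1 s u) (abs_integral_le_of_abs_le_one hg1 s u)
    _ = 2 * |u - s| := by ring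

lemma abs_integrand_sub_le_of_eqOn (hf : Measurable f) (hf1 : ∀ x, |f x| ≤ 1)
    (hg : Measurable g) (hg1 : ∀ x, |g x| ≤ 1) {t u s : ℝ} (hfg : EqOn f g (uIcc u 1))
    (hts : t ≤ s) (hsu : s ≤ u) :
    |f s * (∫ r in s..1, f r) - g s * (∫ r in s..1, g r) - (∫ r in t..1, g r) * (f s - g s)| ≤
      2 * (u - t) := by
  have hfg_tail := abs_integral_to_one_sub_of_eqOn hf hf1 hg hg1 hfg s
  have hg_tail := abs_integral_to_one_sub_le hg hg1 s t
  rw [abs_of_nonneg (sub_nonneg.2 hsu)] at hfg_tail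
  rw [abs_of_nonneg (sub_nonneg.2 hts)] at hg_tail
  calc _ ≤ |(∫ r in s..1, f r) - ∫ r in t..1, g r| + |(∫ r in s..1, g r) - ∫ r in t..1, g r| :=
        abs_mul_sub_mul_sub_mul_sub_le (hf1 s) (hg1 s)
    _ ≤ (2 * (u - s) + (s - t)) + (s - t) := by
        gcongr
        exact (abs_sub_le _ _ _).trans (add_le_add hfg_tail hg_tail)
    _ = 2 * (u - t) := by ring

lemma intervalIntegrable_Jc_integrand (hc : Measurable c) (hcb : ∃ M, ∀ x, |c x| ≤ M)
    (hf : Measurable f) (hfb : ∃ K, ∀ x, |f x| ≤ K) (a b : ℝ) :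
    IntervalIntegrable (fun s => c s * f s * ∫ r in s..1, f r) volume a b := by
  obtain ⟨M, hM⟩ := hcb
  obtain ⟨K, hK⟩ := hfb
  have hcf : IntervalIntegrable (fun s => c s * f s) volume a b :=
    intervalIntegrable_of_abs_le (hc.mul hf) (fun x => by
      rw [Pi.mul_apply, abs_mul]
      exact mul_le_mul (hM x) (hK x) (abs_nonneg _) ((abs_nonneg _).trans (hM x))) a b
  exact hcf.mul_continuousOn
    (continuous_integral_to_one (intervalIntegrable_of_abs_le hf hK)).continuousOn

lemma Jc_sub_Jc_of_eqOn (hc : Measurable c) (hcb : ∃ M, ∀ x, |c x| ≤ M)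
    (hf : Measurable f) (hfb : ∃ K, ∀ x, |f x| ≤ K)
    (hg : Measurable g) (hgb : ∃ K, ∀ x, |g x| ≤ K) {t u : ℝ} (hfg : EqOn f g (uIcc u 1)) :
    Jc c t f - Jc c t g =
      ∫ s in t..u, (c s * f s * ∫ r in s..1, f r) - c s * g s * ∫ r in s..1, g r := by
  have hFi := intervalIntegrable_Jc_integrand hc hcb hf hfb
  have hGi := intervalIntegrable_Jc_integrand hc hcb hg hgb
  have htail : ∫ s in u..1, c s * f s * ∫ r in s..1, f r =
      ∫ s in u..1, c s * g s * ∫ r in s..1, g r :=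
    integral_congr fun s hs => by
      rw [hfg hs, integral_congr (hfg.mono (uIcc_subset_uIcc hs right_mem_uIcc))]
  rw [Jc, Jc, ← integral_add_adjacent_intervals (hFi t u) (hFi u 1),
    ← integral_add_adjacent_intervals (hGi t u) (hGi u 1), htail, integral_sub (hFi t u) (hGi t u)]
  ring

end Controls

theorem stmt19_general (t δ₀ : ℝ) (h1 : t + δ₀ ≤ 1)
    (c α αs : ℝ → ℝ) (hc : Measurable c) (hcb : ∃ M, ∀ x, |c x| ≤ M)
    (hcc : ∀ s ∈ Icc t (t + δ₀), c s = c t)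
    (hα : Measurable α) (hαb : ∀ x, α x ∈ Icc (-1 : ℝ) 1)
    (hαs : Measurable αs) (hαsb : ∀ x, αs x ∈ Icc (-1 : ℝ) 1) :
    ∃ C : ℝ, ∀ δ, 0 < δ → δ ≤ δ₀ →
      |(Jc c t (fun x => if x < t + δ then α x else αs x) - Jc c t αs)
        - c t * (∫ r in t..1, αs r) * ∫ s in t..(t + δ), (α s - αs s)| ≤ C * δ ^ 2 := by
  have hα1 : ∀ x, |α x| ≤ 1 := fun x => abs_le.2 (hαb x)
  have hαs1 : ∀ x, |αs x| ≤ 1 := fun x => abs_le.2 (hαsb x)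
  refine ⟨2 * |c t|, fun δ hδ hδδ => ?_⟩
  have hδ1 : t + δ ≤ 1 := by linarith
  set A : ℝ → ℝ := fun x => if x < t + δ then α x else αs x
  have hA : Measurable A := hα.ite measurableSet_Iio hαs
  have hA1 : ∀ x, |A x| ≤ 1 := fun x => by
    by_cases hx : x < t + δ <;> simp [A, hx, hα1, hαs1]
  have hAαs : EqOn A αs (uIcc (t + δ) 1) := fun x hx =>
    if_neg (not_lt.2 (uIcc_of_le hδ1 ▸ hx).1)
  have hmain_int : IntervalIntegrable (fun s => c t * (∫ r in t..1, αs r) * (α s - αs s)) volume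
      t (t + δ) :=
    (intervalIntegrable_of_abs_le (hα.sub hαs)
      (fun x => (abs_sub _ _).trans (add_le_add (hα1 x) (hαs1 x))) t (t + δ)).const_mul _
  rw [Jc_sub_Jc_of_eqOn hc hcb hA ⟨1, hA1⟩ hαs ⟨1, hαs1⟩ hAαs,
    ← intervalIntegral.integral_const_mul,
    ← integral_sub ((intervalIntegrable_Jc_integrand hc hcb hA ⟨1, hA1⟩ t (t + δ)).sub
      (intervalIntegrable_Jc_integrand hc hcb hαs ⟨1, hαs1⟩ t (t + δ))) hmain_int,
    ← Real.norm_eq_abs]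
  calc ‖∫ s in t..t + δ, _‖ ≤ ∫ _ in t..t + δ, 2 * |c t| * δ :=
        norm_integral_le_of_norm_le (le_add_of_nonneg_right hδ.le) ?_ intervalIntegrable_const
    _ = 2 * |c t| * δ ^ 2 := by rw [intervalIntegral.integral_const, smul_eq_mul]; ring
  -- at `s = t + δ` the spliced control is already `αs`, so that point is discarded
  filter_upwards [Measure.ae_ne volume (t + δ)] with s hs hsI
  have hcs : c s = c t := hcc s ⟨hsI.1.le, by linarith [hsI.2]⟩
  have hAs : A s = α s := if_pos (lt_of_le_of_ne hsI.2 hs)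
  calc _ = |c t| * |A s * (∫ r in s..1, A r) - αs s * (∫ r in s..1, αs r)
        - (∫ r in t..1, αs r) * (A s - αs s)| := by
        rw [Real.norm_eq_abs, ← abs_mul, hcs, hAs]; ring_nf
    _ ≤ |c t| * (2 * (t + δ - t)) := mul_le_mul_of_nonneg_left
        (abs_integrand_sub_le_of_eqOn hA hA1 hαs hαs1 hAαs hsI.1.le hsI.2) (abs_nonneg _)
    _ = 2 * |c t| * δ := by ring

theorem stmt19 (t δ₀ : ℝ) (ht : t ∈ Ico (0 : ℝ) 1) (hδ₀ : 0 < δ₀) (h1 : t + δ₀ ≤ 1)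
    (c α αs : ℝ → ℝ) (hc : Measurable c) (hcb : ∃ M, ∀ x, |c x| ≤ M)
    (hcc : ∀ s ∈ Icc t (t + δ₀), c s = c t) (hct : 0 < c t)
    (hα : Measurable α) (hαb : ∀ x, α x ∈ Icc (-1 : ℝ) 1)
    (hαs : Measurable αs) (hαsb : ∀ x, αs x ∈ Icc (-1 : ℝ) 1) :
    ∃ C : ℝ, ∀ δ, 0 < δ → δ ≤ δ₀ →
      |(Jc c t (fun x => if x < t + δ then α x else αs x) - Jc c t αs)
        - c t * (∫ r in t..1, αs r) * ∫ s in t..(t + δ), (α s - αs s)| ≤ C * δ ^ 2 :=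
  stmt19_general t δ₀ h1 c α αs hc hcb hcc hα hαb hαs hαsb
end
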